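/- arXiv:2508.07939 — 2 statements merged into one kernel-verified Lean document; each statement's English description precedes it below -/
import Mathlib

section
/- The integral of exp(-cot²(x)) over x from 0 to π/2 equals (eπ/2)·erfc(1). -/
open Real MeasureTheory

noncomputable def erfc (x : ℝ) : ℝ := (2 / Real.sqrt π) * ∫ t in Set.Ioi x, Real.exp (-t ^ 2)

/-!
Reflecting `x ↦ π/2 - x` and substituting `t = tan x` turn the integral into
`∫₀^∞ e^{-t²}/(1+t²) dt`. For `a > 0`, write
`e^{-a²t²}/(1+t²) = 2 e^{a²} ∫_a^∞ u e^{-(1+t²)u²} du` and swap the two integrals: the inner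
`t`-integral is Gaussian and equals `(√π/2) e^{-u²}`, leaving `√π e^{a²} ∫_a^∞ e^{-u²} du`,
which is `(π/2) e^{a²} erfc a`.
-/

open Set Filter Topology

lemma image_arctan_Ioi_zero : arctan '' Ioi 0 = Ioo 0 (π / 2) := by
  ext y
  constructor
  · rintro ⟨t, ht, rfl⟩
    exact ⟨by simpa using arctan_strictMono ht, arctan_lt_pi_div_two t⟩
  · rintro ⟨hy₀, hy⟩
    exact ⟨tan y, tan_pos_of_pos_of_lt_pi_div_two hy₀ hy, arctan_tan (by linarith [pi_pos]) hy⟩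

lemma integral_Ioo_comp_tan (g : ℝ → ℝ) :
    ∫ x in Ioo 0 (π / 2), g (tan x) = ∫ t in Ioi 0, g t / (1 + t ^ 2) := by
  rw [← image_arctan_Ioi_zero, integral_image_eq_integral_abs_deriv_smul measurableSet_Ioi
    (fun t _ ↦ (hasDerivAt_arctan t).hasDerivWithinAt) arctan_injective.injOn]
  refine setIntegral_congr_fun measurableSet_Ioi fun t _ ↦ ?_
  rw [tan_arctan, abs_of_pos (by positivity), smul_eq_mul, one_div, inv_mul_eq_div]

lemma integral_comp_cos_div_sin (g : ℝ → ℝ) :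
    ∫ x in (0 : ℝ)..π / 2, g (cos x / sin x) = ∫ t in Ioi 0, g t / (1 + t ^ 2) := by
  have hreflect := intervalIntegral.integral_comp_sub_left (a := 0) (b := π / 2)
    (fun x ↦ g (cos x / sin x)) (π / 2)
  simp only [cos_pi_div_two_sub, sin_pi_div_two_sub, sub_self, sub_zero, ← tan_eq_sin_div_cos]
    at hreflect
  rw [← hreflect, intervalIntegral.integral_of_le (by positivity), integral_Ioc_eq_integral_Ioo,
    integral_Ioo_comp_tan]

lemma integral_Ioi_mul_exp_neg_mul_sq {c : ℝ} (hc : 0 < c) (a : ℝ) :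
    ∫ u in Ioi a, u * exp (-c * u ^ 2) = exp (-c * a ^ 2) / (2 * c) := by
  have hderiv (u : ℝ) :
      HasDerivAt (fun u ↦ -exp (-c * u ^ 2) / (2 * c)) (u * exp (-c * u ^ 2)) u := by
    refine (((hasDerivAt_pow 2 u).const_mul (-c)).exp.fun_neg.div_const (2 * c)).congr_deriv ?_
    field_simp
    ring
  have hlim : Tendsto (fun u ↦ -exp (-c * u ^ 2) / (2 * c)) atTop (𝓝 0) := by
    have : Tendsto (fun u : ℝ ↦ -c * u ^ 2) atTop atBot :=
      (tendsto_pow_atTop two_ne_zero).const_mul_atTop_of_neg (neg_neg_of_pos hc)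
    simpa using ((tendsto_exp_atBot.comp this).neg.div_const (2 * c))
  rw [integral_Ioi_of_hasDerivAt_of_tendsto' (fun u _ ↦ hderiv u)
    (integrable_mul_exp_neg_mul_sq hc).integrableOn hlim]
  ring

lemma integrable_mul_exp_neg_one_add_sq_mul_sq {a : ℝ} (ha : 0 < a) :
    Integrable (fun p : ℝ × ℝ ↦ p.2 * exp (-(1 + p.1 ^ 2) * p.2 ^ 2))
      ((volume.restrict (Ioi 0)).prod (volume.restrict (Ioi a))) := by
  have hdom : Integrable (fun p : ℝ × ℝ ↦ exp (-a ^ 2 * p.1 ^ 2) * (p.2 * exp (-1 * p.2 ^ 2)))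
      ((volume.restrict (Ioi 0)).prod (volume.restrict (Ioi a))) :=
    (integrable_exp_neg_mul_sq (by positivity)).integrableOn.mul_prod
      (integrable_mul_exp_neg_mul_sq one_pos).integrableOn
  refine hdom.mono' (by fun_prop) ?_
  rw [Measure.prod_restrict]
  filter_upwards [ae_restrict_mem (measurableSet_Ioi.prod measurableSet_Ioi)]
    with ⟨t, u⟩ ⟨_, hu⟩
  have hu : a < u := hu
  have hexp : exp (-(1 + t ^ 2) * u ^ 2) ≤ exp (-a ^ 2 * t ^ 2) * exp (-1 * u ^ 2) := by
    rw [← exp_add, exp_le_exp]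
    nlinarith [mul_le_mul_of_nonneg_left (pow_le_pow_left₀ ha.le hu.le 2) (sq_nonneg t)]
  have hu₀ : 0 < u := ha.trans hu
  rw [norm_of_nonneg (by positivity), mul_left_comm]
  exact mul_le_mul_of_nonneg_left hexp hu₀.le

lemma integral_Ioi_exp_neg_sq_div_one_add_sq {a : ℝ} (ha : 0 < a) :
    ∫ t in Ioi 0, exp (-(a * t) ^ 2) / (1 + t ^ 2)
      = √π * exp (a ^ 2) * ∫ u in Ioi a, exp (-u ^ 2) := by
  have hinner (t : ℝ) : exp (-(a * t) ^ 2) / (1 + t ^ 2)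
      = 2 * exp (a ^ 2) * ∫ u in Ioi a, u * exp (-(1 + t ^ 2) * u ^ 2) := by
    have hsplit : exp (-(a * t) ^ 2) = exp (a ^ 2) * exp (-(1 + t ^ 2) * a ^ 2) := by
      rw [← exp_add]; ring_nf
    rw [integral_Ioi_mul_exp_neg_mul_sq (by positivity), hsplit]
    field_simp
  have hgauss {u : ℝ} (hu : 0 < u) :
      ∫ t in Ioi 0, u * exp (-(1 + t ^ 2) * u ^ 2) = √π / 2 * exp (-u ^ 2) := by
    have (t : ℝ) : u * exp (-(1 + t ^ 2) * u ^ 2) = u * exp (-u ^ 2) * exp (-u ^ 2 * t ^ 2) := by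
      rw [mul_assoc, ← exp_add]; ring_nf
    simp_rw [this]
    rw [integral_const_mul, integral_gaussian_Ioi, sqrt_div pi_pos.le, sqrt_sq hu.le]
    field_simp
  calc ∫ t in Ioi 0, exp (-(a * t) ^ 2) / (1 + t ^ 2)
      = 2 * exp (a ^ 2) * ∫ t in Ioi 0, ∫ u in Ioi a, u * exp (-(1 + t ^ 2) * u ^ 2) := by
        simp_rw [hinner]; exact integral_const_mul _ _
    _ = 2 * exp (a ^ 2) * ∫ u in Ioi a, ∫ t in Ioi 0, u * exp (-(1 + t ^ 2) * u ^ 2) := by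
        rw [integral_integral_swap (integrable_mul_exp_neg_one_add_sq_mul_sq ha)]
    _ = 2 * exp (a ^ 2) * ∫ u in Ioi a, √π / 2 * exp (-u ^ 2) := by
        rw [setIntegral_congr_fun measurableSet_Ioi fun u hu ↦ hgauss (ha.trans hu)]
    _ = √π * exp (a ^ 2) * ∫ u in Ioi a, exp (-u ^ 2) := by
        rw [integral_const_mul]; ring

theorem stmt_3 :
    ∫ x in (0:ℝ)..(π / 2), Real.exp (-(Real.cos x / Real.sin x) ^ 2)
      = (Real.exp 1 * π / 2) * erfc 1 := by
  have htail := integral_Ioi_exp_neg_sq_div_one_add_sq one_pos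
  simp only [one_mul, one_pow] at htail
  rw [integral_comp_cos_div_sin (fun t ↦ exp (-t ^ 2)), htail, erfc]
  field_simp
  rw [sq_sqrt pi_pos.le]
  ring
end

section
/- The integral of exp(-sec²(x)) over x from 0 to π/2 equals (π/2)·erfc(1). -/
open Real MeasureTheory

/-!
The substitution `t = tan x` turns `∫₀^{π/2} exp (-c sec² x) dx` into
`∫₀^∞ exp (-c (1 + t²)) / (1 + t²) dt`. Writing `exp (-c q) / q = ∫_c^∞ exp (-q s) ds` and
swapping the integrals, the inner integral over `t` is Gaussian and leaves
`∫_c^∞ exp (-s) √(π / s) / 2 ds`, which `s = u²` turns into `√π ∫_{√c}^∞ exp (-u²) du`.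
-/

open Set

lemma image_tan_Ioo_zero_pi_div_two : tan '' Ioo 0 (π / 2) = Ioi 0 := by
  ext y
  constructor
  · rintro ⟨x, hx, rfl⟩
    exact tan_pos_of_pos_of_lt_pi_div_two hx.1 hx.2
  · intro hy
    refine ⟨arctan y, ⟨?_, arctan_lt_pi_div_two y⟩, tan_arctan y⟩
    simpa using arctan_strictMono hy

lemma integral_comp_tan_Ioo {E : Type*} [NormedAddCommGroup E] [NormedSpace ℝ E] (g : ℝ → E) :
    ∫ x in Ioo 0 (π / 2), g (tan x) = ∫ t in Ioi 0, (1 + t ^ 2)⁻¹ • g t := by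
  have hsub : Ioo 0 (π / 2) ⊆ Ioo (-(π / 2)) (π / 2) :=
    Ioo_subset_Ioo_left (by linarith [pi_div_two_pos])
  have hcos : ∀ x ∈ Ioo 0 (π / 2), cos x ≠ 0 := fun x hx =>
    (cos_pos_of_mem_Ioo (hsub hx)).ne'
  rw [← image_tan_Ioo_zero_pi_div_two,
    integral_image_eq_integral_abs_deriv_smul measurableSet_Ioo
    (fun x hx => (hasDerivAt_tan (hcos x hx)).hasDerivWithinAt) (injOn_tan.mono hsub)]
  refine setIntegral_congr_fun measurableSet_Ioo fun x hx => ?_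
  rw [smul_smul, inv_one_add_tan_sq (hcos x hx), abs_of_nonneg (by positivity),
    one_div_mul_cancel (pow_ne_zero 2 (hcos x hx)), one_smul]

lemma integral_exp_neg_mul_Ioi {a : ℝ} (ha : 0 < a) (c : ℝ) :
    ∫ s in Ioi c, exp (-(a * s)) = exp (-(a * c)) / a := by
  simpa [neg_mul, div_neg, neg_div] using integral_exp_mul_Ioi (neg_lt_zero.mpr ha) c

lemma integral_exp_neg_mul_sqrt_pi_div_Ioi {c : ℝ} (hc : 0 ≤ c) :
    ∫ s in Ioi c, exp (-s) * (√(π / s) / 2) = √π * ∫ u in Ioi √c, exp (-u ^ 2) := by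
  rw [← integral_comp_rpow_Ioi_of_pos' two_pos hc, ← integral_const_mul, sqrt_eq_rpow, one_div]
  refine setIntegral_congr_fun measurableSet_Ioi fun u hu => ?_
  have hu : 0 < u := (rpow_nonneg hc _).trans_lt hu
  norm_num [sqrt_div pi_pos.le, sqrt_sq hu.le]
  field_simp

lemma integrable_exp_neg_one_add_sq_mul {c : ℝ} (hc : 0 < c) :
    Integrable (fun p : ℝ × ℝ => exp (-((1 + p.1 ^ 2) * p.2)))
      ((volume.restrict (Ioi 0)).prod (volume.restrict (Ioi c))) := by
  have hpos : ∀ t : ℝ, 0 < 1 + t ^ 2 := fun t => by positivity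
  refine (integrable_prod_iff (by fun_prop)).mpr ⟨.of_forall fun t => ?_, ?_⟩
  · simpa only [neg_mul, IntegrableOn] using integrableOn_exp_mul_Ioi (neg_lt_zero.mpr (hpos t)) c
  · have hnorm : ∀ t : ℝ, ∫ s in Ioi c, ‖exp (-((1 + t ^ 2) * s))‖
        = (1 + t ^ 2)⁻¹ * exp (-((1 + t ^ 2) * c)) := fun t => by
      simp only [norm_of_nonneg (exp_pos _).le, integral_exp_neg_mul_Ioi (hpos t), inv_mul_eq_div]
    simp only [hnorm]
    refine integrable_inv_one_add_sq.integrableOn.mono' (by fun_prop) (.of_forall fun t => ?_)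
    rw [norm_of_nonneg (by positivity)]
    exact mul_le_of_le_one_right (by positivity)
      (exp_le_one_iff.mpr (neg_nonpos.mpr (mul_pos (hpos t) hc).le))

lemma integral_inv_one_add_sq_mul_exp_neg {c : ℝ} (hc : 0 < c) :
    ∫ t in Ioi 0, (1 + t ^ 2)⁻¹ * exp (-(c * (1 + t ^ 2))) = √π * ∫ u in Ioi √c, exp (-u ^ 2) := by
  have hpos : ∀ t : ℝ, 0 < 1 + t ^ 2 := fun t => by positivity
  calc ∫ t in Ioi 0, (1 + t ^ 2)⁻¹ * exp (-(c * (1 + t ^ 2)))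
      = ∫ t in Ioi 0, ∫ s in Ioi c, exp (-((1 + t ^ 2) * s)) := by
        refine setIntegral_congr_fun measurableSet_Ioi fun t _ => ?_
        rw [integral_exp_neg_mul_Ioi (hpos t), mul_comm c, inv_mul_eq_div]
    _ = ∫ s in Ioi c, ∫ t in Ioi 0, exp (-((1 + t ^ 2) * s)) :=
        integral_integral_swap (integrable_exp_neg_one_add_sq_mul hc)
    _ = ∫ s in Ioi c, exp (-s) * (√(π / s) / 2) := by
        refine setIntegral_congr_fun measurableSet_Ioi fun s _ => ?_
        have hsplit : ∀ t : ℝ, exp (-((1 + t ^ 2) * s)) = exp (-s) * exp (-s * t ^ 2) :=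
          fun t => by rw [← exp_add]; ring_nf
        simp only [hsplit, integral_const_mul, integral_gaussian_Ioi]
    _ = √π * ∫ u in Ioi √c, exp (-u ^ 2) := integral_exp_neg_mul_sqrt_pi_div_Ioi hc.le

lemma integral_exp_neg_mul_sec_sq {c : ℝ} (hc : 0 < c) :
    ∫ x in (0 : ℝ)..(π / 2), exp (-(c * (1 / cos x) ^ 2)) = π / 2 * erfc √c := by
  have hsec : ∀ x ∈ Ioo 0 (π / 2), exp (-(c * (1 / cos x) ^ 2)) = exp (-(c * (1 + tan x ^ 2))) :=
    fun x hx => by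
      have hcos := (cos_pos_of_mem_Ioo (Ioo_subset_Ioo_left (by linarith [pi_div_two_pos]) hx)).ne'
      rw [one_div, inv_pow, ← inv_one_add_tan_sq hcos, inv_inv]
  rw [intervalIntegral.integral_of_le pi_div_two_pos.le, integral_Ioc_eq_integral_Ioo,
    setIntegral_congr_fun measurableSet_Ioo hsec,
    integral_comp_tan_Ioo (fun t => exp (-(c * (1 + t ^ 2))))]
  simp only [smul_eq_mul]
  rw [integral_inv_one_add_sq_mul_exp_neg hc, erfc]
  have hpi : √π ^ 2 = π := sq_sqrt pi_pos.le
  field_simp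
  rw [hpi, mul_comm]

theorem stmt_4 :
    ∫ x in (0:ℝ)..(π / 2), Real.exp (-(1 / Real.cos x) ^ 2)
      = (π / 2) * erfc 1 := by
  simpa using integral_exp_neg_mul_sec_sq one_pos
end
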